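/- arXiv:2602.04379 — 3 statements merged into one kernel-verified Lean document; each statement's English description precedes it below -/
import Mathlib

section
/- Let k be a positive integer and G a connected graph of order n ≥ 2k+9. If the number of edges of G satisfies e(G) ≥ e(K_{2k} ∨ (K_{n-2k-1} ∪ K_1)) = C(n-1,2) + 2k, then G is fractional k-extendable, unless G ≅ K_{2k} ∨ (K_{n-2k-1} ∪ K_1). -/
open Finset

/-- The graph `K_a ∨ (K_b ∪ (n-a-b) K_1)` on vertex set `Fin n`:
first `a` vertices form the joined clique, next `b` form the second clique,
remaining vertices are the independent part. -/
def jud (n a b : ℕ) : SimpleGraph (Fin n) where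
  Adj u v := u ≠ v ∧ ((u : ℕ) < a ∨ (v : ℕ) < a ∨ ((u : ℕ) < a + b ∧ (v : ℕ) < a + b))
  symm := by constructor; intro u v h; exact ⟨h.1.symm, by tauto⟩
  loopless := by constructor; intro u h; exact h.1 rfl

instance (n a b : ℕ) : DecidableRel (jud n a b).Adj := fun u v =>
  inferInstanceAs (Decidable (u ≠ v ∧ ((u : ℕ) < a ∨ (v : ℕ) < a ∨ ((u : ℕ) < a + b ∧ (v : ℕ) < a + b))))

/-- A finite set of edges of `G` forming a matching (pairwise vertex-disjoint edges). -/
def IsMatching {V : Type*} (G : SimpleGraph V) (M : Finset (Sym2 V)) : Prop :=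
  (↑M : Set (Sym2 V)) ⊆ G.edgeSet ∧
    ∀ e ∈ M, ∀ f ∈ M, e ≠ f → ∀ v : V, v ∈ e → v ∉ f

/-- A fractional perfect matching of `G`. -/
def IsFPM {V : Type*} [Fintype V] [DecidableEq V] (G : SimpleGraph V)
    (h : Sym2 V → ℝ) : Prop :=
  (∀ e, 0 ≤ h e ∧ h e ≤ 1) ∧ (∀ e, e ∉ G.edgeSet → h e = 0) ∧
    ∀ v : V, ∑ e ∈ Finset.univ.filter (fun e : Sym2 V => v ∈ e), h e = 1

/-- `G` is fractional `k`-extendable: it has a `k`-matching and every `k`-matching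
extends to a fractional perfect matching assigning weight 1 to its edges. -/
def FracExt {V : Type*} [Fintype V] [DecidableEq V] (k : ℕ) (G : SimpleGraph V) : Prop :=
  (∃ M, IsMatching G M ∧ M.card = k) ∧
    ∀ M, IsMatching G M → M.card = k →
      ∃ h, IsFPM G h ∧ ∀ e ∈ M, h e = 1

/-- The largest eigenvalue (spectral radius, for the symmetric matrices considered here). -/
noncomputable def specRadius {n : ℕ} (M : Matrix (Fin n) (Fin n) ℝ) : ℝ :=
  sSup {t : ℝ | ∃ v : Fin n → ℝ, v ≠ 0 ∧ M.mulVec v = t • v}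

/-- Signless Laplacian spectral radius. -/
noncomputable def qRad {n : ℕ} (G : SimpleGraph (Fin n)) : ℝ := by
  classical exact specRadius (Matrix.of fun u v =>
    (if u = v then (G.degree u : ℝ) else 0) + (if G.Adj u v then 1 else 0))

/-- Distance spectral radius. -/
noncomputable def muRad {n : ℕ} (G : SimpleGraph (Fin n)) : ℝ :=
  specRadius (Matrix.of fun u v => (G.dist u v : ℝ))

/-- Wiener index (sum of pairwise distances). -/
noncomputable def wiener {n : ℕ} (G : SimpleGraph (Fin n)) : ℝ :=
  (∑ u : Fin n, ∑ v : Fin n, (G.dist u v : ℝ)) / 2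

set_option linter.unusedSectionVars false
lemma jud_adj {n a b : ℕ} (u v : Fin n) : (jud n a b).Adj u v ↔
    u ≠ v ∧ ((u : ℕ) < a ∨ (v : ℕ) < a ∨ ((u : ℕ) < a + b ∧ (v : ℕ) < a + b)) := Iff.rfl

namespace Frac
variable {n : ℕ} (G : SimpleGraph (Fin n)) [DecidableRel G.Adj]

/-- complement-degree of `v` inside `W`. -/
def cd (W : Finset (Fin n)) (v : Fin n) : ℕ := (W.filter (fun u => Gᶜ.Adj v u)).card

/-- ordered count of complement-adjacent pairs inside `W`. -/
def ncd (W : Finset (Fin n)) : ℕ := ∑ v ∈ W, cd G W v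

variable {G}

lemma cd_mono {W' W : Finset (Fin n)} (h : W' ⊆ W) (v : Fin n) : cd G W' v ≤ cd G W v :=
  card_le_card (filter_subset_filter _ h)

lemma cd_le_pred {W : Finset (Fin n)} {v : Fin n} (hv : v ∈ W) : cd G W v ≤ W.card - 1 := by
  have h1 : W.filter (fun u => Gᶜ.Adj v u) ⊆ W.erase v := by
    intro u hu
    simp only [mem_filter] at hu
    exact mem_erase.2 ⟨Ne.symm hu.2.ne, hu.1⟩
  calc cd G W v ≤ (W.erase v).card := card_le_card h1
    _ = W.card - 1 := card_erase_of_mem hv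

lemma cd_erase_of_not_cadj {W : Finset (Fin n)} {v x : Fin n} (h : ¬ Gᶜ.Adj v x) :
    cd G (W.erase x) v = cd G W v := by
  unfold cd
  rw [filter_erase, erase_eq_of_notMem (fun hmem => h (mem_filter.1 hmem).2)]

lemma cd_self_erase (W : Finset (Fin n)) (x : Fin n) :
    cd G (W.erase x) x = cd G W x :=
  cd_erase_of_not_cadj (by simp)

lemma ncd_erase {W : Finset (Fin n)} {x : Fin n} (hx : x ∈ W) :
    ncd G W = ncd G (W.erase x) + 2 * cd G W x := by
  unfold ncd
  rw [← Finset.add_sum_erase _ _ hx]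
  have key : ∀ v ∈ W.erase x, cd G W v = cd G (W.erase x) v + (if Gᶜ.Adj v x then 1 else 0) := by
    intro v hv
    have hvx : v ≠ x := (mem_erase.1 hv).1
    unfold cd
    rw [filter_erase]
    by_cases h : Gᶜ.Adj v x
    · have hxf : x ∈ W.filter (fun u => Gᶜ.Adj v u) := mem_filter.2 ⟨hx, h⟩
      rw [if_pos h, card_erase_of_mem hxf]
      have : 1 ≤ (W.filter (fun u => Gᶜ.Adj v u)).card := card_pos.2 ⟨x, hxf⟩
      omega
    · rw [if_neg h, erase_eq_of_notMem (fun hmem => h (mem_filter.1 hmem).2)]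
      rw [Nat.add_zero]
  rw [Finset.sum_congr rfl key, Finset.sum_add_distrib, Finset.sum_boole]
  have : ((W.erase x).filter (fun v => Gᶜ.Adj v x)).card = cd G (W.erase x) x := by
    unfold cd
    congr 1
    apply filter_congr
    intro u _
    simp [SimpleGraph.adj_comm]
  rw [this, cd_self_erase]
  simp only [Nat.cast_id]
  ring

lemma two_cd_le_ncd {W : Finset (Fin n)} {x : Fin n} (hx : x ∈ W) :
    2 * cd G W x ≤ ncd G W := by
  rw [ncd_erase hx]; omega

lemma ncd_mono {W' W : Finset (Fin n)} (h : W' ⊆ W) : ncd G W' ≤ ncd G W := by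
  unfold ncd
  calc ∑ v ∈ W', cd G W' v ≤ ∑ v ∈ W', cd G W v := Finset.sum_le_sum (fun v _ => cd_mono h v)
    _ ≤ ∑ v ∈ W, cd G W v := Finset.sum_le_sum_of_subset h

lemma exists_adj_of_ncd_lt {A : Finset (Fin n)} (h : ncd G A < A.card * (A.card - 1)) :
    ∃ b ∈ A, ∃ c ∈ A, G.Adj b c := by
  by_contra hno
  push_neg at hno
  have : ∀ v ∈ A, cd G A v = A.card - 1 := by
    intro v hv
    unfold cd
    have : A.filter (fun u => Gᶜ.Adj v u) = A.erase v := by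
      ext u
      simp only [mem_filter, mem_erase, SimpleGraph.compl_adj]
      constructor
      · rintro ⟨hu, hne, -⟩; exact ⟨hne.symm, hu⟩
      · rintro ⟨hne, hu⟩; exact ⟨hu, hne.symm, hno v hv u hu⟩
    rw [this, card_erase_of_mem hv]
  have : ncd G A = A.card * (A.card - 1) := by
    unfold ncd
    rw [Finset.sum_congr rfl this, Finset.sum_const, smul_eq_mul]
  omega

lemma exists_nbr {W : Finset (Fin n)} {v : Fin n} (hv : v ∈ W) (h : cd G W v + 2 ≤ W.card) :
    ∃ u ∈ W, G.Adj v u := by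
  have hsub : W.filter (fun u => Gᶜ.Adj v u) ⊆ W.erase v := by
    intro u hu
    simp only [mem_filter] at hu
    exact mem_erase.2 ⟨Ne.symm hu.2.ne, hu.1⟩
  have hlt : (W.filter (fun u => Gᶜ.Adj v u)).card < (W.erase v).card := by
    rw [card_erase_of_mem hv]
    have := @cd_le_pred n G _ W v hv
    unfold cd at *
    omega
  obtain ⟨u, hu1, hu2⟩ := Finset.exists_of_ssubset (Finset.ssubset_iff_of_subset hsub |>.mpr
    (by obtain ⟨u, hu, hnu⟩ := Finset.exists_of_ssubset (hsub.ssubset_of_ne (by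
          intro heq; rw [heq] at hlt; omega)); exact ⟨u, hu, hnu⟩))
  refine ⟨u, (mem_erase.1 hu1).2, ?_⟩
  by_contra hadj
  exact hu2 (mem_filter.2 ⟨(mem_erase.1 hu1).2, ⟨Ne.symm (mem_erase.1 hu1).1, hadj⟩⟩)


/-- A fixed-point-free `G`-adjacent involution supported on `S`. -/
def FCover (G : SimpleGraph (Fin n)) (S : Finset (Fin n)) : Prop :=
  ∃ f : Fin n → Fin n, (∀ v, v ∉ S → f v = v) ∧
    ∀ v ∈ S, f v ∈ S ∧ G.Adj v (f v) ∧ f (f v) = v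

lemma fcover_congr {S S' : Finset (Fin n)} (h : S = S') (hf : FCover G S) : FCover G S' :=
  h ▸ hf

lemma fcover_empty : FCover G (∅ : Finset (Fin n)) :=
  ⟨id, fun _ _ => rfl, fun v hv => absurd hv (notMem_empty v)⟩

lemma fcover_combine {S : Finset (Fin n)} {x u : Fin n} (hx : x ∈ S) (hu : u ∈ S)
    (hadj : G.Adj x u) (h : FCover G ((S.erase x).erase u)) : FCover G S := by
  obtain ⟨f', hfix, hcov⟩ := h
  have hxu : x ≠ u := hadj.ne
  set S2 := (S.erase x).erase u with hS2
  have hxS2 : x ∉ S2 := by simp [hS2]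
  have huS2 : u ∉ S2 := by simp [hS2]
  set f : Fin n → Fin n := fun v => if v = x then u else if v = u then x else f' v with hf
  have hfx : f x = u := by simp [hf, hxu]
  have hfu : f u = x := by simp [hf, hxu.symm]
  have hfo : ∀ v, v ≠ x → v ≠ u → f v = f' v := by
    intro v h1 h2; simp [hf, h1, h2]
  refine ⟨f, ?_, ?_⟩
  · intro v hv
    have hvx : v ≠ x := fun h => hv (h ▸ hx)
    have hvu : v ≠ u := fun h => hv (h ▸ hu)
    rw [hfo v hvx hvu]
    exact hfix v (fun hmem => hv (mem_of_mem_erase (mem_of_mem_erase hmem)))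
  · intro v hv
    by_cases hvx : v = x
    · subst hvx
      rw [hfx, hfu]
      exact ⟨hu, hadj, rfl⟩
    by_cases hvu : v = u
    · subst hvu
      rw [hfu, hfx]
      exact ⟨hx, hadj.symm, rfl⟩
    · have hvS2 : v ∈ S2 := by simp [hS2, hvx, hvu, hv]
      obtain ⟨h1, h2, h3⟩ := hcov v hvS2
      have hf1 : f' v ≠ x := fun h => hxS2 (h ▸ h1)
      have hf2 : f' v ≠ u := fun h => huS2 (h ▸ h1)
      rw [hfo v hvx hvu, hfo _ hf1 hf2, h3]
      exact ⟨mem_of_mem_erase (mem_of_mem_erase h1), h2, rfl⟩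

lemma card_erase2 {S : Finset (Fin n)} {x u : Fin n} (hx : x ∈ S) (hu : u ∈ S) (hxu : x ≠ u) :
    ((S.erase x).erase u).card = S.card - 2 := by
  rw [card_erase_of_mem (mem_erase.2 ⟨hxu.symm, hu⟩), card_erase_of_mem hx]
  omega

lemma adj_of_ncadj {v u : Fin n} (hne : v ≠ u) (h : ¬ Gᶜ.Adj v u) : G.Adj v u := by
  by_contra ha
  exact h ((G.compl_adj v u).2 ⟨hne, ha⟩)

lemma ncd_pair_kill {W : Finset (Fin n)} {x u : Fin n} (hx : x ∈ W) (hu : u ∈ W)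
    (hadj : G.Adj x u) :
    ncd G ((W.erase x).erase u) + 2 * cd G W x + 2 * cd G W u ≤ ncd G W := by
  have hu' : u ∈ W.erase x := mem_erase.2 ⟨hadj.ne', hu⟩
  have h1 : ncd G (W.erase x) = ncd G ((W.erase x).erase u) + 2 * cd G (W.erase x) u :=
    ncd_erase hu'
  have h2 : cd G (W.erase x) u = cd G W u :=
    cd_erase_of_not_cadj (by simp [SimpleGraph.compl_adj, hadj.symm])
  have h3 := ncd_erase (G := G) hx
  omega

/-- Perfect matching lemma: even `W` with few complement pairs has an `FCover`. -/
lemma pm2 : ∀ m (W : Finset (Fin n)), W.card = m → Even m →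
    (W = ∅ ∨ ncd G W + 4 ≤ 2 * m) → FCover G W := by
  intro m
  induction m using Nat.strong_induction_on with
  | _ m IH =>
    intro W hcard heven hncd
    rcases hncd with hW | hncd
    · exact hW ▸ fcover_empty
    by_cases hWe : W = ∅
    · exact hWe ▸ fcover_empty
    have hne : W.Nonempty := nonempty_iff_ne_empty.2 hWe
    have hm2 : 2 ≤ m := by
      rcases heven with ⟨j, hj⟩
      have : 1 ≤ m := hcard ▸ card_pos.2 hne
      omega
    -- choose x of maximal cd
    obtain ⟨x, hxW, hmax⟩ := Finset.exists_max_image W (cd G W) hne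
    have hdle : cd G W x + 2 ≤ m := by
      have := two_cd_le_ncd (G := G) hxW
      omega
    have heven' : Even (m - 2) := by
      rcases heven with ⟨j, hj⟩; exact ⟨j - 1, by omega⟩
    have hfin : ∀ u ∈ W, G.Adj x u →
        ((W.erase x).erase u = ∅ ∨ ncd G ((W.erase x).erase u) + 4 ≤ 2 * (m - 2)) →
        FCover G W := by
      intro u huW hadj hok
      refine fcover_combine hxW huW hadj ?_
      exact IH (m - 2) (by omega) _ (by rw [card_erase2 hxW huW hadj.ne]; omega) heven' hok
    have hkill : ∀ u ∈ W, G.Adj x u →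
        ncd G ((W.erase x).erase u) + 2 * cd G W x + 2 * cd G W u ≤ ncd G W :=
      fun u hu hadj => ncd_pair_kill hxW hu hadj
    by_cases hu1 : ∃ u ∈ W, G.Adj x u ∧ 1 ≤ cd G W u
    · obtain ⟨u, huW, hadj, hcdu⟩ := hu1
      have hd1 : 1 ≤ cd G W x := le_trans hcdu (hmax u huW)
      apply hfin u huW hadj
      right
      have := hkill u huW hadj
      omega
    · push_neg at hu1
      obtain ⟨u, huW, hadj⟩ := exists_nbr (G := G) hxW (by omega)
      apply hfin u huW hadj
      by_cases hW2 : (W.erase x).erase u = ∅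
      · exact Or.inl hW2
      right
      have hW2c : ((W.erase x).erase u).card = m - 2 := by
        rw [card_erase2 hxW huW hadj.ne]; omega
      have hm4 : 4 ≤ m := by
        have h1 : 1 ≤ ((W.erase x).erase u).card :=
          card_pos.2 (nonempty_iff_ne_empty.2 hW2)
        have : Even (((W.erase x).erase u).card) := hW2c ▸ heven'
        rcases this with ⟨j, hj⟩
        omega
      have hk := hkill u huW hadj
      by_cases hd2 : 2 ≤ cd G W x
      · omega
      · -- cd x ≤ 1 : show ncd G W ≤ 1 + cd G W x
        have hbound : ∀ v ∈ W, cd G W v ≤ if v = x ∨ Gᶜ.Adj x v then 1 else 0 := by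
          intro v hvW
          by_cases h1 : v = x ∨ Gᶜ.Adj x v
          · rw [if_pos h1]
            rcases h1 with h1 | h1
            · subst h1; omega
            · exact le_trans (hmax v hvW) (by omega)
          · rw [if_neg h1]
            push_neg at h1
            have hadjv : G.Adj x v := by
              rcases (em (G.Adj x v)) with h | h
              · exact h
              · exact absurd ((G.compl_adj x v).2 ⟨Ne.symm h1.1, h⟩) h1.2
            have := hu1 v hvW hadjv
            omega
        have hncdle : ncd G W ≤ 1 + cd G W x := by
          have h1 : ncd G W ≤ ∑ v ∈ W, (if v = x ∨ Gᶜ.Adj x v then 1 else 0) :=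
            Finset.sum_le_sum hbound
          rw [Finset.sum_boole] at h1
          have h2 : W.filter (fun v => v = x ∨ Gᶜ.Adj x v) ⊆
              insert x (W.filter (fun u => Gᶜ.Adj x u)) := by
            intro v hv
            simp only [mem_filter, mem_insert] at hv ⊢
            tauto
          have h3 := card_le_card h2
          have h4 := card_insert_le x (W.filter (fun u => Gᶜ.Adj x u))
          simp only [Nat.cast_id] at h1
          have : (W.filter (fun u => Gᶜ.Adj x u)).card = cd G W x := rfl
          omega
        by_cases hd0 : cd G W x = 0
        · have hz : ncd G W = 0 := by
            have : ∀ v ∈ W, cd G W v = 0 := fun v hv => by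
              have := hmax v hv; omega
            unfold ncd
            rw [Finset.sum_congr rfl this, Finset.sum_const, smul_eq_mul, mul_zero]
          omega
        · omega


/-- the set of `G`-neighbours-in-`W` complement view: vertices of `W` other than `x`
not complement-adjacent to `x` (hence adjacent to `x`). -/
def nbA (G : SimpleGraph (Fin n)) [DecidableRel G.Adj] (W : Finset (Fin n)) (x : Fin n) :
    Finset (Fin n) :=
  (W.erase x).filter (fun u => ¬ Gᶜ.Adj x u)

lemma nbA_mem {W : Finset (Fin n)} {x u : Fin n} (h : u ∈ nbA G W x) :
    u ∈ W ∧ u ≠ x ∧ G.Adj x u := by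
  simp only [nbA, mem_filter, mem_erase] at h
  exact ⟨h.1.2, h.1.1, adj_of_ncadj (Ne.symm h.1.1) h.2⟩

lemma nbA_card {W : Finset (Fin n)} {x : Fin n} (hx : x ∈ W) :
    (nbA G W x).card + 1 + cd G W x = W.card := by
  have hsplit : ((W.erase x).filter (fun u => Gᶜ.Adj x u)).card + (nbA G W x).card
      = (W.erase x).card := card_filter_add_card_filter_not _
  have h2 : ((W.erase x).filter (fun u => Gᶜ.Adj x u)).card = cd G W x := by
    unfold cd
    rw [filter_erase, erase_eq_of_notMem (by simp)]
  rw [card_erase_of_mem hx] at hsplit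
  have : 1 ≤ W.card := card_pos.2 ⟨x, hx⟩
  omega

lemma nbA_subset {W : Finset (Fin n)} {x : Fin n} : nbA G W x ⊆ W.erase x :=
  filter_subset _ _

lemma ncd_nbA {W : Finset (Fin n)} {x : Fin n} (hx : x ∈ W) :
    ncd G (nbA G W x) + 2 * cd G W x ≤ ncd G W := by
  have h1 : ncd G (nbA G W x) ≤ ncd G (W.erase x) := ncd_mono nbA_subset
  have h2 := ncd_erase (G := G) hx
  omega

/-- find a triangle through the vertex `x`. -/
lemma tri_at {W : Finset (Fin n)} {x : Fin n} (hx : x ∈ W)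
    (hlt : ncd G (nbA G W x) < (nbA G W x).card * ((nbA G W x).card - 1)) :
    ∃ b c, b ∈ W ∧ c ∈ W ∧ b ≠ x ∧ c ≠ x ∧ b ≠ c ∧
      G.Adj x b ∧ G.Adj x c ∧ G.Adj b c := by
  obtain ⟨b, hb, c, hc, hbc⟩ := exists_adj_of_ncd_lt hlt
  obtain ⟨hbW, hbx, hxb⟩ := nbA_mem hb
  obtain ⟨hcW, hcx, hxc⟩ := nbA_mem hc
  exact ⟨b, c, hbW, hcW, hbx, hcx, hbc.ne, hxb, hxc, hbc⟩

lemma card_erase3 {W : Finset (Fin n)} {a b c : Fin n} (ha : a ∈ W) (hb : b ∈ W) (hc : c ∈ W)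
    (hab : a ≠ b) (hac : a ≠ c) (hbc : b ≠ c) :
    (((W.erase a).erase b).erase c).card = W.card - 3 := by
  rw [card_erase_of_mem (by simp [mem_erase, hbc.symm, hac.symm, hc]),
    card_erase_of_mem (by simp [mem_erase, hab.symm, hb]), card_erase_of_mem ha]
  omega

lemma ncd_erase3_le {W : Finset (Fin n)} {a b c : Fin n} :
    ncd G (((W.erase a).erase b).erase c) ≤ ncd G W :=
  ncd_mono ((erase_subset _ _).trans ((erase_subset _ _).trans (erase_subset _ _)))

/-- Existence of a triangle when the complement count is small. -/
lemma tri' {W : Finset (Fin n)} (h7 : 7 ≤ W.card) (h : ncd G W + 10 ≤ 2 * W.card) :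
    ∃ a b c, a ∈ W ∧ b ∈ W ∧ c ∈ W ∧ a ≠ b ∧ a ≠ c ∧ b ≠ c ∧
      G.Adj a b ∧ G.Adj a c ∧ G.Adj b c := by
  have hne : W.Nonempty := card_pos.1 (by omega)
  obtain ⟨x, hxW, hmax⟩ := Finset.exists_max_image W (cd G W) hne
  have hd : 2 * cd G W x ≤ ncd G W := two_cd_le_ncd hxW
  have hAc := nbA_card (G := G) hxW
  have hAn := ncd_nbA (G := G) hxW
  have h4 : 4 ≤ (nbA G W x).card := by omega
  have hmul : (nbA G W x).card * 3 ≤ (nbA G W x).card * ((nbA G W x).card - 1) :=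
    Nat.mul_le_mul_left _ (by omega)
  obtain ⟨b, c, hbW, hcW, hbx, hcx, hbc, h1, h2, h3⟩ := tri_at (G := G) hxW (by omega)
  exact ⟨x, b, c, hxW, hbW, hcW, hbx.symm, hcx.symm, hbc, h1, h2, h3⟩

lemma pm2_of {W : Finset (Fin n)} (heven : Even W.card)
    (h : W = ∅ ∨ ncd G W + 4 ≤ 2 * W.card) : FCover G W :=
  pm2 W.card W rfl heven h


lemma odd9 {W : Finset (Fin n)} (h9 : 9 ≤ W.card) (hodd : Odd W.card)
    (hncd : ncd G W + 2 ≤ 2 * W.card)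
    (hcd : ∀ v ∈ W, cd G W v + 2 ≤ W.card) :
    ∃ a b c, a ∈ W ∧ b ∈ W ∧ c ∈ W ∧ a ≠ b ∧ a ≠ c ∧ b ≠ c ∧
      G.Adj a b ∧ G.Adj a c ∧ G.Adj b c ∧
      FCover G (((W.erase a).erase b).erase c) := by
  obtain ⟨j, hj⟩ := hodd
  set m := W.card with hm
  have finish : ∀ a b c, a ∈ W → b ∈ W → c ∈ W → a ≠ b → a ≠ c → b ≠ c →
      G.Adj a b → G.Adj a c → G.Adj b c →
      ncd G (((W.erase a).erase b).erase c) + 10 ≤ 2 * m →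
      ∃ a b c, a ∈ W ∧ b ∈ W ∧ c ∈ W ∧ a ≠ b ∧ a ≠ c ∧ b ≠ c ∧
        G.Adj a b ∧ G.Adj a c ∧ G.Adj b c ∧
        FCover G (((W.erase a).erase b).erase c) := by
    intro a b c ha hb hc hab hac hbc h1 h2 h3 hsm
    refine ⟨a, b, c, ha, hb, hc, hab, hac, hbc, h1, h2, h3, ?_⟩
    have hc3 := card_erase3 ha hb hc hab hac hbc
    refine pm2_of (by rw [hc3]; exact ⟨j - 1, by omega⟩) (Or.inr ?_)
    rw [hc3]
    omega
  by_cases hA : ncd G W + 10 ≤ 2 * m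
  · obtain ⟨a, b, c, ha, hb, hc, hab, hac, hbc, h1, h2, h3⟩ := tri' (G := G) (by omega) hA
    exact finish a b c ha hb hc hab hac hbc h1 h2 h3
      (by have := ncd_erase3_le (G := G) (W := W) (a := a) (b := b) (c := c); omega)
  push_neg at hA
  have hne : W.Nonempty := card_pos.1 (by omega)
  obtain ⟨x, hxW, hmax⟩ := Finset.exists_max_image W (cd G W) hne
  have hdm := hcd x hxW
  have hAc := nbA_card (G := G) hxW
  have hAn := ncd_nbA (G := G) hxW
  have hsub3 : ∀ b c : Fin n, ncd G (((W.erase x).erase b).erase c) ≤ ncd G (W.erase x) :=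
    fun b c => ncd_mono ((erase_subset _ _).trans (erase_subset _ _))
  have hex := ncd_erase (G := G) hxW
  by_cases hbig : m ≤ cd G W x + 4
  · by_cases hBe : ∃ b ∈ nbA G W x, ∃ c ∈ nbA G W x, G.Adj b c
    · obtain ⟨b, hbA, c, hcA, hbc⟩ := hBe
      obtain ⟨hbW, hbx, hxb⟩ := nbA_mem hbA
      obtain ⟨hcW, hcx, hxc⟩ := nbA_mem hcA
      exact finish x b c hxW hbW hcW hbx.symm hcx.symm hbc.ne hxb hxc hbc
        (by have := hsub3 b c; omega)
    · push_neg at hBe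
      obtain ⟨u, huA⟩ := card_pos.1 (show 0 < (nbA G W x).card by omega)
      obtain ⟨huW, hux, hxu⟩ := nbA_mem huA
      have hcdu : (nbA G W x).card - 1 ≤ cd G W u := by
        have hsub : (nbA G W x).erase u ⊆ W.filter (fun v => Gᶜ.Adj u v) := by
          intro v hv
          obtain ⟨hvu, hvA⟩ := mem_erase.1 hv
          obtain ⟨hvW, _, _⟩ := nbA_mem hvA
          exact mem_filter.2 ⟨hvW, (G.compl_adj u v).2 ⟨Ne.symm hvu, hBe u huA v hvA⟩⟩
        have := card_le_card hsub
        rw [card_erase_of_mem huA] at this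
        exact this
      have hkill := ncd_pair_kill (G := G) hxW huW hxu
      set W2 := (W.erase x).erase u with hW2
      have hW2c : W2.card = m - 2 := card_erase2 hxW huW hxu.ne
      have hW2n : ncd G W2 ≤ 2 := by omega
      obtain ⟨a, b, c, ha, hb, hc, hab, hac, hbc, h1, h2, h3⟩ :=
        tri' (G := G) (W := W2) (by omega) (by omega)
      have haW : a ∈ W := mem_of_mem_erase (mem_of_mem_erase ha)
      have hbW : b ∈ W := mem_of_mem_erase (mem_of_mem_erase hb)
      have hcW : c ∈ W := mem_of_mem_erase (mem_of_mem_erase hc)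
      refine ⟨a, b, c, haW, hbW, hcW, hab, hac, hbc, h1, h2, h3, ?_⟩
      have hax : a ≠ x := (mem_erase.1 (mem_of_mem_erase ha)).1
      have hbx : b ≠ x := (mem_erase.1 (mem_of_mem_erase hb)).1
      have hcx : c ≠ x := (mem_erase.1 (mem_of_mem_erase hc)).1
      have hau : a ≠ u := (mem_erase.1 ha).1
      have hbu : b ≠ u := (mem_erase.1 hb).1
      have hcu : c ≠ u := (mem_erase.1 hc).1
      refine fcover_combine (G := G) (x := x) (u := u)
        (by simp [mem_erase, hax.symm, hbx.symm, hcx.symm, hxW])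
        (by simp [mem_erase, hau.symm, hbu.symm, hcu.symm, hux, huW]) hxu ?_
      have hseteq : ((((((W.erase a).erase b).erase c)).erase x).erase u)
          = ((W2.erase a).erase b).erase c := by
        ext v
        simp only [hW2, mem_erase]
        tauto
      refine fcover_congr hseteq.symm ?_
      have hc3 : (((W2.erase a).erase b).erase c).card = m - 5 := by
        rw [card_erase3 ha hb hc hab hac hbc, hW2c]
        omega
      refine pm2_of (by rw [hc3]; exact ⟨j - 2, by omega⟩) (Or.inr ?_)
      rw [hc3]
      have := ncd_erase3_le (G := G) (W := W2) (a := a) (b := b) (c := c)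
      omega
  · -- cd x ≤ m - 5
    by_cases hd4 : 4 ≤ cd G W x
    · have hmul : (nbA G W x).card * 3 ≤ (nbA G W x).card * ((nbA G W x).card - 1) :=
        Nat.mul_le_mul_left _ (by omega)
      obtain ⟨b, c, hbW, hcW, hbx, hcx, hbc, h1, h2, h3⟩ := tri_at (G := G) hxW (by omega)
      exact finish x b c hxW hbW hcW hbx.symm hcx.symm hbc h1 h2 h3
        (by have := hsub3 b c; omega)
    · by_cases hd1 : cd G W x ≤ 1
      · have hnm : ncd G W ≤ m := by
          calc ncd G W ≤ ∑ v ∈ W, 1 := Finset.sum_le_sum (fun v hv => by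
                have := hmax v hv; omega)
            _ = m := by rw [Finset.sum_const, smul_eq_mul, mul_one]
        have hdpos : 1 ≤ cd G W x := by
          by_contra hz
          have : ncd G W = 0 := by
            refine Finset.sum_eq_zero (fun v hv => by have := hmax v hv; omega)
          omega
        have hmul : (nbA G W x).card * 6 ≤ (nbA G W x).card * ((nbA G W x).card - 1) :=
          Nat.mul_le_mul_left _ (by omega)
        obtain ⟨b, c, hbW, hcW, hbx, hcx, hbc, h1, h2, h3⟩ := tri_at (G := G) hxW (by omega)
        exact finish x b c hxW hbW hcW hbx.symm hcx.symm hbc h1 h2 h3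
          (by have := hsub3 b c; omega)
      · -- cd x ∈ {2, 3}
        have hd23 : cd G W x = 2 ∨ cd G W x = 3 := by omega
        by_cases heasy : ncd G W + 10 ≤ 2 * m + 2 * cd G W x
        · have hmul : (nbA G W x).card * 4 ≤ (nbA G W x).card * ((nbA G W x).card - 1) :=
            Nat.mul_le_mul_left _ (by omega)
          obtain ⟨b, c, hbW, hcW, hbx, hcx, hbc, h1, h2, h3⟩ := tri_at (G := G) hxW (by omega)
          exact finish x b c hxW hbW hcW hbx.symm hcx.symm hbc h1 h2 h3
            (by have := hsub3 b c; omega)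
        · push_neg at heasy
          -- find b ∈ nbA with cd b ≥ 4 - cd x
          have hb2 : ∃ b ∈ nbA G W x, 4 - cd G W x ≤ cd G W b := by
            by_contra hno
            push_neg at hno
            have hbound : ncd G W ≤
                ∑ v ∈ W, (if v ∈ nbA G W x then 3 - cd G W x else cd G W x) := by
              refine Finset.sum_le_sum (fun v hv => ?_)
              by_cases hvA : v ∈ nbA G W x
              · rw [if_pos hvA]
                have := hno v hvA
                omega
              · rw [if_neg hvA]
                exact hmax v hv
            rw [Finset.sum_ite, Finset.sum_const, Finset.sum_const, smul_eq_mul,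
              smul_eq_mul] at hbound
            have hAW : nbA G W x ⊆ W := nbA_subset.trans (erase_subset _ _)
            have h1 : (W.filter (fun v => v ∈ nbA G W x)).card = (nbA G W x).card := by
              rw [Finset.filter_mem_eq_inter, Finset.inter_eq_right.2 hAW]
            have h2 := card_filter_add_card_filter_not
              (s := W) (p := fun v => v ∈ nbA G W x)
            rcases hd23 with hd | hd <;> rw [hd] at hbound <;> norm_num at hbound <;> omega
          obtain ⟨b, hbA, hbcd⟩ := hb2
          obtain ⟨hbW, hbx, hxb⟩ := nbA_mem hbA
          -- find c ∈ nbA, c ≠ b, not complement-adjacent to b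
          have hc2 : ∃ c ∈ nbA G W x, c ≠ b ∧ ¬ Gᶜ.Adj b c := by
            have hbd : cd G W b ≤ cd G W x := hmax b hbW
            have hcard : 1 ≤ (((nbA G W x).erase b) \ (W.filter (fun v => Gᶜ.Adj b v))).card := by
              have h1 := Finset.le_card_sdiff (W.filter (fun v => Gᶜ.Adj b v))
                ((nbA G W x).erase b)
              rw [card_erase_of_mem hbA] at h1
              have h2 : (W.filter (fun v => Gᶜ.Adj b v)).card = cd G W b := rfl
              omega
            obtain ⟨c, hcmem⟩ := card_pos.1 hcard
            obtain ⟨hc1, hc2'⟩ := Finset.mem_sdiff.1 hcmem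
            obtain ⟨hcb, hcA⟩ := mem_erase.1 hc1
            exact ⟨c, hcA, hcb, fun hcon => hc2' (mem_filter.2 ⟨(nbA_mem hcA).1, hcon⟩)⟩
          obtain ⟨c, hcA, hcb, hncbc⟩ := hc2
          obtain ⟨hcW, hcx, hxc⟩ := nbA_mem hcA
          have hbc : G.Adj b c := adj_of_ncadj (Ne.symm hcb) hncbc
          have hkill := ncd_pair_kill (G := G) hxW hbW hxb
          have hmono : ncd G (((W.erase x).erase b).erase c) ≤ ncd G ((W.erase x).erase b) :=
            ncd_mono (erase_subset _ _)
          exact finish x b c hxW hbW hcW hbx.symm hcx.symm hcb.symm hxb hxc hbc (by omega)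


lemma even9 {W : Finset (Fin n)} (h9 : 9 ≤ W.card) (heven : Even W.card)
    (hncd : ncd G W + 2 ≤ 2 * W.card)
    (hcd : ∀ v ∈ W, cd G W v + 2 ≤ W.card) : FCover G W := by
  obtain ⟨j, hj⟩ := heven
  set m := W.card with hm
  by_cases h4 : ncd G W + 4 ≤ 2 * m
  · exact pm2_of (G := G) ⟨j, hj⟩ (Or.inr h4)
  push_neg at h4
  have hne : W.Nonempty := card_pos.1 (by omega)
  obtain ⟨x, hxW, hmax⟩ := Finset.exists_max_image W (cd G W) hne
  have hdm := hcd x hxW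
  have hfin : ∀ u ∈ W, G.Adj x u → ncd G ((W.erase x).erase u) + 4 ≤ 2 * (m - 2) →
      FCover G W := by
    intro u huW hadj hok
    refine fcover_combine hxW huW hadj ?_
    refine pm2_of (G := G) (by rw [card_erase2 hxW huW hadj.ne]; exact ⟨j - 1, by omega⟩)
      (Or.inr ?_)
    rw [card_erase2 hxW huW hadj.ne]
    exact hok
  by_cases hd3 : 3 ≤ cd G W x
  · obtain ⟨u, huW, hadj⟩ := exists_nbr (G := G) hxW (by omega)
    have hkill := ncd_pair_kill (G := G) hxW huW hadj
    exact hfin u huW hadj (by omega)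
  · by_cases hd2 : cd G W x = 2
    · have hD2 : ncd G W ≤ ∑ v ∈ W, (if cd G W v = 2 then 2 else 1) := by
        refine Finset.sum_le_sum (fun v hv => ?_)
        by_cases h : cd G W v = 2
        · rw [if_pos h]; omega
        · rw [if_neg h]
          have := hmax v hv
          omega
      rw [Finset.sum_ite, Finset.sum_const, Finset.sum_const, smul_eq_mul,
        smul_eq_mul] at hD2
      have hsplitc := card_filter_add_card_filter_not
        (s := W) (p := fun v => cd G W v = 2)
      have hbex : 1 ≤ ((W.filter (fun v => cd G W v = 2)) \
          (insert x (W.filter (fun v => Gᶜ.Adj x v)))).card := by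
        have h1 := Finset.le_card_sdiff (insert x (W.filter (fun v => Gᶜ.Adj x v)))
          (W.filter (fun v => cd G W v = 2))
        have h2 := card_insert_le x (W.filter (fun v => Gᶜ.Adj x v))
        have h3 : (W.filter (fun v => Gᶜ.Adj x v)).card = cd G W x := rfl
        omega
      obtain ⟨b, hbmem⟩ := card_pos.1 hbex
      obtain ⟨hb1, hb2⟩ := Finset.mem_sdiff.1 hbmem
      obtain ⟨hbW, hbcd⟩ := mem_filter.1 hb1
      have hbx : b ≠ x := fun h => hb2 (mem_insert.2 (Or.inl h))
      have hnca : ¬ Gᶜ.Adj x b := fun h => hb2 (mem_insert.2 (Or.inr (mem_filter.2 ⟨hbW, h⟩)))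
      have hadj : G.Adj x b := adj_of_ncadj (Ne.symm hbx) hnca
      have hkill := ncd_pair_kill (G := G) hxW hbW hadj
      exact hfin b hbW hadj (by omega)
    · exfalso
      have hnm : ncd G W ≤ m := by
        calc ncd G W ≤ ∑ v ∈ W, 1 := Finset.sum_le_sum (fun v hv => by
              have := hmax v hv; omega)
          _ = m := by rw [Finset.sum_const, smul_eq_mul, mul_one]
      omega


/-- weight function associated to a permutation. -/
noncomputable def wfun (σ : Equiv.Perm (Fin n)) : Sym2 (Fin n) → ℝ :=
  Sym2.lift ⟨fun u v => ((if σ u = v then (1:ℝ) else 0) + (if σ v = u then 1 else 0)) / 2,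
    fun u v => by dsimp; rw [add_comm]⟩

lemma wfun_mk (σ : Equiv.Perm (Fin n)) (u v : Fin n) :
    wfun σ s(u, v) = ((if σ u = v then (1:ℝ) else 0) + (if σ v = u then 1 else 0)) / 2 := rfl

lemma wfun_one (σ : Equiv.Perm (Fin n)) {u v : Fin n} (h1 : σ u = v) (h2 : σ v = u) :
    wfun σ s(u, v) = 1 := by
  rw [wfun_mk, if_pos h1, if_pos h2]
  norm_num

lemma isFPM_of_perm (σ : Equiv.Perm (Fin n)) (hadj : ∀ v, G.Adj v (σ v)) :
    IsFPM G (wfun σ) := by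
  refine ⟨?_, ?_, ?_⟩
  · intro e
    induction e using Sym2.ind with
    | _ u v =>
      rw [wfun_mk]
      constructor <;> split_ifs <;> norm_num
  · intro e he
    induction e using Sym2.ind with
    | _ u v =>
      rw [SimpleGraph.mem_edgeSet] at he
      have h1 : ¬ σ u = v := fun h => he (h ▸ hadj u)
      have h2 : ¬ σ v = u := fun h => he (((h ▸ hadj v) : G.Adj v u).symm)
      rw [wfun_mk, if_neg h1, if_neg h2]
      norm_num
  · intro v
    have himg : Finset.univ.filter (fun e : Sym2 (Fin n) => v ∈ e)
        = Finset.univ.image (fun w => s(v, w)) := by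
      ext e
      simp only [mem_filter, mem_univ, true_and, Finset.mem_image]
      constructor
      · intro h
        obtain ⟨w, hw⟩ := Sym2.mem_iff_exists.1 h
        exact ⟨w, hw.symm⟩
      · rintro ⟨w, rfl⟩
        exact Sym2.mem_mk_left v w
    rw [himg, Finset.sum_image (fun a _ b _ h => Sym2.congr_right.1 h)]
    have : ∀ w : Fin n, wfun σ s(v, w)
        = ((if σ v = w then (1:ℝ) else 0) + (if w = σ.symm v then 1 else 0)) / 2 := by
      intro w
      rw [wfun_mk]
      congr 2
      by_cases h : σ w = v
      · rw [if_pos h, if_pos (by rw [Equiv.eq_symm_apply]; exact h)]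
      · rw [if_neg h, if_neg (by rw [Equiv.eq_symm_apply]; exact h)]
    rw [Finset.sum_congr rfl (fun w _ => this w), ← Finset.sum_div,
      Finset.sum_add_distrib, Finset.sum_ite_eq, Finset.sum_ite_eq']
    simp

section Matching
variable (M : Finset (Sym2 (Fin n)))

/-- vertices covered by the matching. -/
def mvert : Finset (Fin n) := Finset.univ.filter (fun v => ∃ e ∈ M, v ∈ e)

lemma mem_mvert {v : Fin n} : v ∈ mvert M ↔ ∃ e ∈ M, v ∈ e := by
  simp [mvert]

variable {M}

lemma medge_unique (hM : IsMatching G M) {v : Fin n} {e f : Sym2 (Fin n)} (he : e ∈ M)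
    (hf : f ∈ M) (hve : v ∈ e) (hvf : v ∈ f) : e = f := by
  by_contra hne
  exact hM.2 e he f hf hne v hve hvf

variable (hM : IsMatching G M)

/-- the partner function of the matching. -/
noncomputable def fM : Fin n → Fin n := fun v =>
  if hv : v ∈ mvert M then
    Sym2.Mem.other' (Finset.choose_property (fun e => v ∈ e) M
      (by
        obtain ⟨e, he, hve⟩ := (mem_mvert M).1 hv
        exact ⟨e, ⟨he, hve⟩, fun f ⟨hf, hvf⟩ => medge_unique hM hf he hvf hve⟩))
  else v

lemma fM_edge {v : Fin n} (hv : v ∈ mvert M) : s(v, fM hM v) ∈ M := by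
  unfold fM
  rw [dif_pos hv]
  rw [Sym2.other_spec']
  exact Finset.choose_mem _ _ _

lemma fM_fix {v : Fin n} (hv : v ∉ mvert M) : fM hM v = v := by
  unfold fM
  rw [dif_neg hv]

lemma fM_eq {u v : Fin n} (h : s(u, v) ∈ M) : fM hM u = v := by
  have hu : u ∈ mvert M := (mem_mvert M).2 ⟨_, h, Sym2.mem_mk_left u v⟩
  have h2 := fM_edge hM hu
  have h3 : s(u, fM hM u) = s(u, v) :=
    medge_unique hM h2 h (Sym2.mem_mk_left _ _) (Sym2.mem_mk_left _ _)
  exact Sym2.congr_right.1 h3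

lemma fM_mem {v : Fin n} (hv : v ∈ mvert M) : fM hM v ∈ mvert M :=
  (mem_mvert M).2 ⟨_, fM_edge hM hv, Sym2.mem_mk_right _ _⟩

lemma fM_invol {v : Fin n} (hv : v ∈ mvert M) : fM hM (fM hM v) = v :=
  fM_eq hM (by rw [Sym2.eq_swap]; exact fM_edge hM hv)

lemma fM_adj {v : Fin n} (hv : v ∈ mvert M) : G.Adj v (fM hM v) :=
  (G.mem_edgeSet).1 (hM.1 (fM_edge hM hv))

lemma fM_ne {v : Fin n} (hv : v ∈ mvert M) : fM hM v ≠ v :=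
  (fM_adj hM hv).ne'

lemma mvert_card (hM : IsMatching G M) : (mvert M).card = 2 * M.card := by
  have h1 : mvert M = M.biUnion (fun e => Finset.univ.filter (fun v => v ∈ e)) := by
    ext v
    simp [mem_mvert]
  rw [h1, Finset.card_biUnion]
  · have h2 : ∀ e ∈ M, (Finset.univ.filter (fun v => v ∈ e)).card = 2 := by
      intro e he
      induction e using Sym2.ind with
      | _ a b =>
        have hab : a ≠ b := by
          intro h
          have h2 : ¬ (s(a,b)).IsDiag := G.not_isDiag_of_mem_edgeSet (hM.1 he)
          subst h
          exact h2 (Sym2.mk_isDiag_iff.2 rfl)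
        have : Finset.univ.filter (fun v => v ∈ s(a, b)) = {a, b} := by
          ext v
          simp [Sym2.mem_iff]
        rw [this, Finset.card_insert_of_notMem (by simp [hab]), Finset.card_singleton]
    rw [Finset.sum_congr rfl h2, Finset.sum_const, smul_eq_mul]
    ring
  · intro e he f hf hef
    simp only [Finset.disjoint_left, mem_filter]
    rintro v ⟨-, hv⟩ hvf
    exact hM.2 e he f hf hef v hv hvf.2

end Matching


lemma matching_exists {k : ℕ} (hn : 2 * k + 9 ≤ n)
    (hGc : ncd G Finset.univ ≤ 2 * (n - 2 * k - 1)) :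
    ∀ j, j ≤ k → ∃ M, IsMatching G M ∧ M.card = j := by
  intro j
  induction j with
  | zero =>
    exact fun _ => ⟨∅, ⟨by simp, fun e he => absurd he (notMem_empty e)⟩, rfl⟩
  | succ j ih =>
    intro hjk
    obtain ⟨M, hM, hMc⟩ := ih (by omega)
    set U := Finset.univ \ mvert M with hU
    have hUc : U.card = n - 2 * j := by
      rw [hU, card_sdiff_of_subset (subset_univ _), mvert_card hM, hMc, card_univ, Fintype.card_fin]
    have hmul : U.card * 10 ≤ U.card * (U.card - 1) :=
      Nat.mul_le_mul_left _ (by omega)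
    have hUn : ncd G U ≤ ncd G Finset.univ := ncd_mono (subset_univ _)
    obtain ⟨b, hb, c, hc, hbc⟩ := exists_adj_of_ncd_lt (G := G) (A := U) (by omega)
    have hbM : b ∉ mvert M := (Finset.mem_sdiff.1 hb).2
    have hcM : c ∉ mvert M := (Finset.mem_sdiff.1 hc).2
    have henew : s(b, c) ∉ M := fun h => hbM ((mem_mvert M).2 ⟨_, h, Sym2.mem_mk_left _ _⟩)
    refine ⟨insert s(b, c) M, ⟨?_, ?_⟩, by rw [card_insert_of_notMem henew, hMc]⟩
    · intro e he
      rw [Finset.mem_coe, Finset.mem_insert] at he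
      rcases he with rfl | he
      · exact (G.mem_edgeSet).2 hbc
      · exact hM.1 he
    · intro e he f hf hef v hve hvf
      rw [Finset.mem_insert] at he hf
      have hnewv : ∀ w, w ∈ s(b, c) → w ∉ mvert M := by
        intro w hw
        rw [Sym2.mem_iff] at hw
        rcases hw with rfl | rfl
        exacts [hbM, hcM]
      rcases he with rfl | he <;> rcases hf with rfl | hf
      · exact absurd rfl hef
      · exact (hnewv v hve) ((mem_mvert M).2 ⟨f, hf, hvf⟩)
      · exact (hnewv v hvf) ((mem_mvert M).2 ⟨e, he, hve⟩)
      · exact hM.2 e he f hf hef v hve hvf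

lemma extend {k : ℕ} (hn : 2 * k + 9 ≤ n)
    (hGc : ncd G Finset.univ ≤ 2 * (n - 2 * k - 1))
    (hdeg : ∀ v, cd G Finset.univ v + 2 * k + 2 ≤ n)
    {M : Finset (Sym2 (Fin n))} (hM : IsMatching G M) (hMc : M.card = k) :
    ∃ h, IsFPM G h ∧ ∀ e ∈ M, h e = 1 := by
  set W := Finset.univ \ mvert M with hW
  have hWc : W.card = n - 2 * k := by
    rw [hW, card_sdiff_of_subset (subset_univ _), mvert_card hM, hMc, card_univ, Fintype.card_fin]
  have hWncd : ncd G W + 2 ≤ 2 * W.card := by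
    have := ncd_mono (G := G) (subset_univ W)
    omega
  have hWcd : ∀ v ∈ W, cd G W v + 2 ≤ W.card := by
    intro v hv
    have h1 := cd_mono (G := G) (subset_univ W) v
    have h2 := hdeg v
    omega
  have h9 : 9 ≤ W.card := by omega
  have hmdisj : ∀ v, v ∈ mvert M → v ∉ W := fun v hv hvW => (Finset.mem_sdiff.1 hvW).2 hv
  have hmW : ∀ v, v ∉ mvert M → v ∈ W :=
    fun v hv => Finset.mem_sdiff.2 ⟨mem_univ v, hv⟩
  -- σ construction
  have key : ∃ σ : Equiv.Perm (Fin n), (∀ v, G.Adj v (σ v)) ∧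
      ∀ v ∈ mvert M, σ v = fM hM v := by
    by_cases hpar : Even W.card
    · obtain ⟨fc, hfix, hcov⟩ := even9 (G := G) h9 hpar hWncd hWcd
      set f : Fin n → Fin n := fun v => if v ∈ mvert M then fM hM v else fc v with hf
      have hfm : ∀ v ∈ mvert M, f v = fM hM v := fun v hv => by rw [hf]; simp [hv]
      have hfw : ∀ v ∉ mvert M, f v = fc v := fun v hv => by
        rw [hf]; simp [hv]
      have hinv : Function.Involutive f := by
        intro v
        by_cases hv : v ∈ mvert M
        · rw [hfm v hv, hfm _ (fM_mem hM hv), fM_invol hM hv]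
        · have hvW : v ∈ W := hmW v hv
          obtain ⟨h1, h2, h3⟩ := hcov v hvW
          rw [hfw v hv, hfw _ (hmdisj _ |>.mt (fun h => h h1) |> fun hh => by
            by_contra hmem
            exact hmdisj _ hmem h1)]
          exact h3
      refine ⟨hinv.toPerm f, ?_, ?_⟩
      · intro v
        by_cases hv : v ∈ mvert M
        · show G.Adj v (f v)
          rw [hfm v hv]
          exact fM_adj hM hv
        · have hvW := hmW v hv
          show G.Adj v (f v)
          rw [hfw v hv]
          exact (hcov v hvW).2.1
      · intro v hv
        show f v = _
        exact hfm v hv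
    · obtain ⟨a, b, c, haW, hbW, hcW, hab, hac, hbc, hab', hac', hbc', hcov3⟩ :=
        odd9 (G := G) h9 (Nat.not_even_iff_odd.1 hpar) hWncd hWcd
      obtain ⟨fc, hfix, hcov⟩ := hcov3
      set W3 := ((W.erase a).erase b).erase c with hW3
      have hW3W : W3 ⊆ W := (erase_subset _ _).trans ((erase_subset _ _).trans (erase_subset _ _))
      have haM : a ∉ mvert M := fun h => hmdisj a h haW
      have hbM : b ∉ mvert M := fun h => hmdisj b h hbW
      have hcM : c ∉ mvert M := fun h => hmdisj c h hcW
      have haW3 : a ∉ W3 := by simp [hW3, mem_erase]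
      have hbW3 : b ∉ W3 := by simp [hW3, mem_erase, hab.symm]
      have hcW3 : c ∉ W3 := by simp [hW3, mem_erase]
      set f : Fin n → Fin n := fun v => if v ∈ mvert M then fM hM v else fc v with hf
      have hfm : ∀ v ∈ mvert M, f v = fM hM v := fun v hv => by rw [hf]; simp [hv]
      have hfw : ∀ v ∉ mvert M, f v = fc v := fun v hv => by rw [hf]; simp [hv]
      have hmemT : ∀ v, v ∉ mvert M → v ∉ W3 → f v = v := by
        intro v h1 h2
        rw [hfw v h1]
        exact hfix v h2
      have hmap : ∀ v, v ≠ a → v ≠ b → v ≠ c →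
          f (f v) = v ∧ G.Adj v (f v) ∧ f v ≠ a ∧ f v ≠ b ∧ f v ≠ c := by
        intro v hva hvb hvc
        by_cases hv : v ∈ mvert M
        · have h1 := fM_mem hM hv
          refine ⟨by rw [hfm v hv, hfm _ h1, fM_invol hM hv], by rw [hfm v hv]; exact fM_adj hM hv,
            ?_, ?_, ?_⟩ <;> rw [hfm v hv] <;> intro hh <;>
            [exact haM (hh ▸ h1); exact hbM (hh ▸ h1); exact hcM (hh ▸ h1)]
        · have hvW : v ∈ W := hmW v hv
          have hvW3 : v ∈ W3 := by
            rw [hW3]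
            exact mem_erase.2 ⟨hvc, mem_erase.2 ⟨hvb, mem_erase.2 ⟨hva, hvW⟩⟩⟩
          obtain ⟨h1, h2, h3⟩ := hcov v hvW3
          have hfvM : f v ∉ mvert M := by
            rw [hfw v hv]
            exact fun hh => hmdisj _ hh (hW3W h1)
          refine ⟨by rw [hfw v hv, hfw _ (by rw [← hfw v hv]; exact hfvM), h3],
            by rw [hfw v hv]; exact h2, ?_, ?_, ?_⟩ <;> rw [hfw v hv] <;> intro hh <;>
            [exact haW3 (hh ▸ h1); exact hbW3 (hh ▸ h1); exact hcW3 (hh ▸ h1)]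
      set g : Fin n → Fin n :=
        fun v => if v = a then b else if v = b then c else if v = c then a else f v with hg
      set g' : Fin n → Fin n :=
        fun v => if v = a then c else if v = b then a else if v = c then b else f v with hg'
      have hga : g a = b := by simp [hg]
      have hgb : g b = c := by rw [hg]; simp [hab.symm]
      have hgc : g c = a := by rw [hg]; simp [hac.symm, hbc.symm]
      have hgo : ∀ v, v ≠ a → v ≠ b → v ≠ c → g v = f v := by
        intro v h1 h2 h3; rw [hg]; simp [h1, h2, h3]
      have hg'a : g' a = c := by simp [hg']
      have hg'b : g' b = a := by rw [hg']; simp [hab.symm]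
      have hg'c : g' c = b := by rw [hg']; simp [hac.symm, hbc.symm]
      have hg'o : ∀ v, v ≠ a → v ≠ b → v ≠ c → g' v = f v := by
        intro v h1 h2 h3; rw [hg']; simp [h1, h2, h3]
      have hleft : Function.LeftInverse g' g := by
        intro v
        by_cases h1 : v = a
        · rw [h1, hga, hg'b]
        by_cases h2 : v = b
        · rw [h2, hgb, hg'c]
        by_cases h3 : v = c
        · rw [h3, hgc, hg'a]
        · obtain ⟨hi, -, hfa, hfb, hfc⟩ := hmap v h1 h2 h3
          rw [hgo v h1 h2 h3, hg'o _ hfa hfb hfc, hi]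
      have hright : Function.RightInverse g' g := by
        intro v
        by_cases h1 : v = a
        · rw [h1, hg'a, hgc]
        by_cases h2 : v = b
        · rw [h2, hg'b, hga]
        by_cases h3 : v = c
        · rw [h3, hg'c, hgb]
        · obtain ⟨hi, -, hfa, hfb, hfc⟩ := hmap v h1 h2 h3
          rw [hg'o v h1 h2 h3, hgo _ hfa hfb hfc, hi]
      refine ⟨⟨g, g', hleft, hright⟩, ?_, ?_⟩
      · intro v
        show G.Adj v (g v)
        by_cases h1 : v = a
        · rw [h1, hga]; exact hab'
        by_cases h2 : v = b
        · rw [h2, hgb]; exact hbc'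
        by_cases h3 : v = c
        · rw [h3, hgc]; exact hac'.symm
        · rw [hgo v h1 h2 h3]
          exact (hmap v h1 h2 h3).2.1
      · intro v hv
        show g v = _
        have h1 : v ≠ a := fun hh => haM (hh ▸ hv)
        have h2 : v ≠ b := fun hh => hbM (hh ▸ hv)
        have h3 : v ≠ c := fun hh => hcM (hh ▸ hv)
        rw [hgo v h1 h2 h3, hfm v hv]
  obtain ⟨σ, hσadj, hσM⟩ := key
  refine ⟨wfun σ, isFPM_of_perm (G := G) σ hσadj, ?_⟩
  intro e he
  induction e using Sym2.ind with
  | _ u v =>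
    have hu : u ∈ mvert M := (mem_mvert M).2 ⟨_, he, Sym2.mem_mk_left _ _⟩
    have hv : v ∈ mvert M := (mem_mvert M).2 ⟨_, he, Sym2.mem_mk_right _ _⟩
    have h1 : σ u = v := by rw [hσM u hu, fM_eq hM he]
    have h2 : σ v = u := by
      rw [hσM v hv, fM_eq hM (by rw [Sym2.eq_swap]; exact he)]
    exact wfun_one σ h1 h2


lemma caseA {k : ℕ} (hk : 1 ≤ k) (hn : 2 * k + 9 ≤ n)
    (hcc : Gᶜ.edgeFinset.card ≤ n - 2 * k - 1)
    (v₀ : Fin n) (hv₀ : n - 2 * k - 1 ≤ Gᶜ.degree v₀) :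
    Nonempty (G ≃g jud n (2 * k) (n - 2 * k - 1)) := by
  classical
  have hsub : Gᶜ.incidenceFinset v₀ ⊆ Gᶜ.edgeFinset := by
    intro e he
    rw [SimpleGraph.mem_incidenceFinset] at he
    exact SimpleGraph.mem_edgeFinset.2 he.1
  have hcardinc : (Gᶜ.incidenceFinset v₀).card = Gᶜ.degree v₀ :=
    Gᶜ.card_incidenceFinset_eq_degree v₀
  have hstar : ∀ e ∈ Gᶜ.edgeFinset, v₀ ∈ e := by
    intro e he
    by_contra hv
    have hins : insert e (Gᶜ.incidenceFinset v₀) ⊆ Gᶜ.edgeFinset :=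
      Finset.insert_subset he hsub
    have hnotin : e ∉ Gᶜ.incidenceFinset v₀ := by
      rw [SimpleGraph.mem_incidenceFinset]
      exact fun h => hv h.2
    have := card_le_card hins
    rw [card_insert_of_notMem hnotin, hcardinc] at this
    omega
  have hadjv : ∀ x y : Fin n, Gᶜ.Adj x y → x = v₀ ∨ y = v₀ := by
    intro x y hxy
    have he : s(x, y) ∈ Gᶜ.edgeFinset := SimpleGraph.mem_edgeFinset.2 ((Gᶜ.mem_edgeSet).2 hxy)
    have := hstar _ he
    rw [Sym2.mem_iff] at this
    rcases this with h | h
    exacts [Or.inl h.symm, Or.inr h.symm]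
  set L := Gᶜ.neighborFinset v₀ with hL
  have hdegL : L.card = Gᶜ.degree v₀ := rfl
  have hdeg_eq : Gᶜ.degree v₀ = n - 2 * k - 1 := by
    have := card_le_card hsub
    omega
  have hLcard : L.card = n - 2 * k - 1 := by rw [hdegL, hdeg_eq]
  have hLv₀ : v₀ ∉ L := by
    rw [hL, SimpleGraph.mem_neighborFinset]
    exact fun h => h.ne rfl
  set R : Finset (Fin n) := Finset.univ \ insert v₀ L with hR
  have hRcard : R.card = 2 * k := by
    rw [hR, card_sdiff_of_subset (subset_univ _), card_insert_of_notMem hLv₀, card_univ,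
      Fintype.card_fin, hLcard]
    omega
  have hRv₀ : v₀ ∉ R := by
    rw [hR]
    simp
  have hRL : ∀ w ∈ R, w ∉ L := by
    intro w hw
    rw [hR, Finset.mem_sdiff] at hw
    exact fun h => hw.2 (Finset.mem_insert.2 (Or.inr h))
  have hRne : ∀ w ∈ R, w ≠ v₀ := by
    intro w hw h
    exact hRv₀ (h ▸ hw)
  have htri : ∀ w : Fin n, w ∈ R ∨ w ∈ L ∨ w = v₀ := by
    intro w
    by_cases h : w ∈ R
    · exact Or.inl h
    · rw [hR, Finset.mem_sdiff] at h
      push_neg at h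
      rcases Finset.mem_insert.1 (h (mem_univ w)) with h2 | h2
      exacts [Or.inr (Or.inr h2), Or.inr (Or.inl h2)]
  have hGiff : ∀ u v : Fin n, G.Adj u v ↔
      (u ≠ v ∧ ¬(u = v₀ ∧ v ∈ L) ∧ ¬(v = v₀ ∧ u ∈ L)) := by
    intro u v
    constructor
    · intro h
      refine ⟨h.ne, ?_, ?_⟩
      · rintro ⟨he, hvL⟩
        rw [hL, SimpleGraph.mem_neighborFinset] at hvL
        rw [he] at h
        exact ((G.compl_adj v₀ v).1 hvL).2 h
      · rintro ⟨he, huL⟩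
        rw [hL, SimpleGraph.mem_neighborFinset] at huL
        rw [he] at h
        exact ((G.compl_adj v₀ u).1 huL).2 h.symm
    · rintro ⟨hne, h1, h2⟩
      by_contra hno
      have hca : Gᶜ.Adj u v := (G.compl_adj u v).2 ⟨hne, hno⟩
      rcases hadjv u v hca with rfl | rfl
      · exact h1 ⟨rfl, by rw [hL, SimpleGraph.mem_neighborFinset]; exact hca⟩
      · exact h2 ⟨rfl, by rw [hL, SimpleGraph.mem_neighborFinset]; exact hca.symm⟩
  -- build the permutation
  have hLc' : Fintype.card ↥(L : Finset (Fin n)) = n - 2 * k - 1 := by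
    rw [Fintype.card_coe, hLcard]
  have hRc' : Fintype.card ↥(R : Finset (Fin n)) = 2 * k := by
    rw [Fintype.card_coe, hRcard]
  set eL := Fintype.equivFinOfCardEq hLc' with heL
  set eR := Fintype.equivFinOfCardEq hRc' with heR
  set π : Fin n → Fin n := fun w =>
    if h : w ∈ R then ⟨(eR ⟨w, h⟩ : Fin (2 * k)), by have := (eR ⟨w, h⟩).isLt; omega⟩
    else if h2 : w ∈ L then
      ⟨2 * k + (eL ⟨w, h2⟩ : Fin (n - 2 * k - 1)), by have := (eL ⟨w, h2⟩).isLt; omega⟩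
    else ⟨n - 1, by omega⟩ with hπ
  have hπR : ∀ w (h : w ∈ R), (π w : ℕ) = (eR ⟨w, h⟩ : Fin (2 * k)) := by
    intro w h
    rw [hπ]
    simp only [dif_pos h]
  have hπL : ∀ w (h2 : w ∈ L), (π w : ℕ) = 2 * k + (eL ⟨w, h2⟩ : Fin (n - 2 * k - 1)) := by
    intro w h2
    have h : w ∉ R := fun hh => hRL w hh h2
    rw [hπ]
    simp only [dif_neg h, dif_pos h2]
  have hπ0 : (π v₀ : ℕ) = n - 1 := by
    rw [hπ]
    simp only [dif_neg hRv₀, dif_neg hLv₀]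
  have hπRlt : ∀ w, w ∈ R → (π w : ℕ) < 2 * k := by
    intro w h
    rw [hπR w h]
    exact (eR ⟨w, h⟩).isLt
  have hπLrange : ∀ w, w ∈ L → 2 * k ≤ (π w : ℕ) ∧ (π w : ℕ) < n - 1 := by
    intro w h
    rw [hπL w h]
    have := (eL ⟨w, h⟩).isLt
    omega
  set ρ : Fin n → Fin n := fun i =>
    if h : (i : ℕ) < 2 * k then (eR.symm ⟨(i : ℕ), h⟩ : ↥R)
    else if h2 : (i : ℕ) - 2 * k < n - 2 * k - 1 then (eL.symm ⟨(i : ℕ) - 2 * k, h2⟩ : ↥L)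
    else v₀ with hρ
  have hli : Function.LeftInverse ρ π := by
    intro w
    rcases htri w with hw | hw | hw
    · have hc : (π w : ℕ) < 2 * k := hπRlt w hw
      rw [hρ]
      simp only [dif_pos hc]
      have h1 : (⟨(π w : ℕ), hc⟩ : Fin (2 * k)) = eR ⟨w, hw⟩ := Fin.ext (hπR w hw)
      rw [h1, Equiv.symm_apply_apply]
    · obtain ⟨hc1, hc2⟩ := hπLrange w hw
      have hnc : ¬ (π w : ℕ) < 2 * k := by omega
      have hc3 : (π w : ℕ) - 2 * k < n - 2 * k - 1 := by omega
      rw [hρ]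
      simp only [dif_neg hnc, dif_pos hc3]
      have h1 : (⟨(π w : ℕ) - 2 * k, hc3⟩ : Fin (n - 2 * k - 1)) = eL ⟨w, hw⟩ := by
        apply Fin.ext
        have := hπL w hw
        simp only [this]
        omega
      rw [h1, Equiv.symm_apply_apply]
    · subst hw
      have hnc : ¬ (π w : ℕ) < 2 * k := by rw [hπ0]; omega
      have hnc2 : ¬ ((π w : ℕ) - 2 * k < n - 2 * k - 1) := by rw [hπ0]; omega
      rw [hρ]
      simp only [dif_neg hnc, dif_neg hnc2]
  have hinj : Function.Injective π := hli.injective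
  have hbij : Function.Bijective π := Finite.injective_iff_bijective.1 hinj
  have hv0iff : ∀ w : Fin n, w = v₀ ↔ (π w : ℕ) = n - 1 := by
    intro w
    rcases htri w with hw | hw | hw
    · have := hπRlt w hw
      exact ⟨fun h => absurd (h ▸ hw) hRv₀, fun h => by omega⟩
    · have := hπLrange w hw
      exact ⟨fun h => absurd (h ▸ hw) hLv₀, fun h => by omega⟩
    · subst hw
      simp [hπ0]
  have hLiff : ∀ w : Fin n, w ∈ L ↔ (2 * k ≤ (π w : ℕ) ∧ (π w : ℕ) < n - 1) := by
    intro w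
    rcases htri w with hw | hw | hw
    · have := hπRlt w hw
      exact ⟨fun h => absurd h (hRL w hw), fun h => by omega⟩
    · exact ⟨fun _ => hπLrange w hw, fun _ => hw⟩
    · subst hw
      rw [hπ0]
      exact ⟨fun h => absurd h hLv₀, fun h => by omega⟩
  have hveq : ∀ u v : Fin n, u = v ↔ (π u : ℕ) = (π v : ℕ) := by
    intro u v
    constructor
    · rintro rfl; rfl
    · intro h
      exact hinj (Fin.ext h)
  refine ⟨⟨Equiv.ofBijective _ hbij, ?_⟩⟩
  intro u v
  show (jud n (2 * k) (n - 2 * k - 1)).Adj (π u) (π v) ↔ G.Adj u v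
  rw [jud_adj, hGiff]
  have hu := (π u).isLt
  have hv := (π v).isLt
  simp only [ne_eq]
  rw [Fin.ext_iff, hveq u v, hLiff u, hLiff v, hv0iff u, hv0iff v]
  omega


lemma cd_univ_eq (v : Fin n) : cd G Finset.univ v = Gᶜ.degree v := by
  unfold cd
  rw [← SimpleGraph.neighborFinset_eq_filter]
  rfl

lemma ncd_univ_eq : ncd G Finset.univ = 2 * Gᶜ.edgeFinset.card := by
  unfold ncd
  rw [Finset.sum_congr rfl (fun v _ => cd_univ_eq v)]
  exact Gᶜ.sum_degrees_eq_twice_card_edges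

lemma edge_union_compl (H : SimpleGraph (Fin n)) [DecidableRel H.Adj] :
    H.edgeFinset ∪ Hᶜ.edgeFinset = (⊤ : SimpleGraph (Fin n)).edgeFinset := by
  ext e
  induction e using Sym2.ind with
  | _ u v =>
    simp only [Finset.mem_union, SimpleGraph.mem_edgeFinset, SimpleGraph.mem_edgeSet,
      SimpleGraph.compl_adj, SimpleGraph.top_adj]
    constructor
    · rintro (h | h)
      exacts [h.ne, h.1]
    · intro h
      by_cases ha : H.Adj u v
      exacts [Or.inl ha, Or.inr ⟨h, ha⟩]

lemma card_add_compl (H : SimpleGraph (Fin n)) [DecidableRel H.Adj] :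
    H.edgeFinset.card + Hᶜ.edgeFinset.card = ((⊤ : SimpleGraph (Fin n)).edgeFinset).card := by
  have hdisj : Disjoint H.edgeFinset Hᶜ.edgeFinset := by
    rw [Finset.disjoint_left]
    intro e he he'
    rw [SimpleGraph.mem_edgeFinset] at he he'
    induction e using Sym2.ind with
    | _ u v =>
      rw [SimpleGraph.mem_edgeSet] at he he'
      exact ((H.compl_adj u v).1 he').2 he
  rw [← card_union_of_disjoint hdisj, edge_union_compl]

lemma judc_card {k : ℕ} (hn : 2 * k + 9 ≤ n) :
    ((jud n (2 * k) (n - 2 * k - 1))ᶜ.edgeFinset).card = n - 2 * k - 1 := by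
  have hjc : ∀ u v : Fin n, (jud n (2 * k) (n - 2 * k - 1))ᶜ.Adj u v ↔
      (u ≠ v ∧ 2 * k ≤ (u : ℕ) ∧ 2 * k ≤ (v : ℕ) ∧ ((u : ℕ) = n - 1 ∨ (v : ℕ) = n - 1)) := by
    intro u v
    rw [SimpleGraph.compl_adj, jud_adj]
    have h1 := u.isLt
    have h2 := v.isLt
    constructor
    · rintro ⟨hne', hna⟩
      have hnc : ¬((u : ℕ) < 2 * k ∨ (v : ℕ) < 2 * k ∨
          ((u : ℕ) < 2 * k + (n - 2 * k - 1) ∧ (v : ℕ) < 2 * k + (n - 2 * k - 1))) :=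
        fun hc => hna ⟨hne', hc⟩
      exact ⟨hne', by omega⟩
    · rintro ⟨hne', hc⟩
      refine ⟨hne', fun hadj => ?_⟩
      obtain ⟨-, hd⟩ := hadj
      omega
  set vl : Fin n := ⟨n - 1, by omega⟩ with hvl
  have hvlval : (vl : ℕ) = n - 1 := rfl
  have himg : (jud n (2 * k) (n - 2 * k - 1))ᶜ.edgeFinset =
      (Finset.univ.filter (fun u : Fin n => 2 * k ≤ (u : ℕ) ∧ (u : ℕ) < n - 1)).image
        (fun u => s(u, vl)) := by
    ext e
    induction e using Sym2.ind with
    | _ u v =>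
      rw [SimpleGraph.mem_edgeFinset, SimpleGraph.mem_edgeSet, hjc]
      constructor
      · rintro ⟨hne, hu, hv, hor⟩
        have hneval : (u : ℕ) ≠ (v : ℕ) := fun h => hne (Fin.ext h)
        rcases hor with h | h
        · refine Finset.mem_image.2 ⟨v, Finset.mem_filter.2 ⟨mem_univ _, hv, by omega⟩, ?_⟩
          have huvl : vl = u := Fin.ext (by rw [hvlval, h])
          rw [huvl, Sym2.eq_swap]
        · refine Finset.mem_image.2 ⟨u, Finset.mem_filter.2 ⟨mem_univ _, hu, by omega⟩, ?_⟩
          have hvvl : vl = v := Fin.ext (by rw [hvlval, h])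
          rw [hvvl]
      · intro hmem
        obtain ⟨w, hw, heq⟩ := Finset.mem_image.1 hmem
        obtain ⟨-, hw1, hw2⟩ := Finset.mem_filter.1 hw
        rcases Sym2.eq_iff.1 heq with ⟨h1, h2⟩ | ⟨h1, h2⟩
        · have hvval : (v : ℕ) = n - 1 := by rw [← h2, hvlval]
          have huval : 2 * k ≤ (u : ℕ) ∧ (u : ℕ) < n - 1 := by
            rw [← h1]; exact ⟨hw1, hw2⟩
          refine ⟨fun hh => ?_, by omega, by omega, by omega⟩
          have := congrArg Fin.val hh
          omega
        · have huval : (u : ℕ) = n - 1 := by rw [← h2, hvlval]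
          have hvval : 2 * k ≤ (v : ℕ) ∧ (v : ℕ) < n - 1 := by
            rw [← h1]; exact ⟨hw1, hw2⟩
          refine ⟨fun hh => ?_, by omega, by omega, by omega⟩
          have := congrArg Fin.val hh
          omega
  rw [himg, Finset.card_image_of_injOn]
  · have himgv : Finset.image Fin.val
        (Finset.univ.filter (fun u : Fin n => 2 * k ≤ (u : ℕ) ∧ (u : ℕ) < n - 1))
        = Finset.Ico (2 * k) (n - 1) := by
      ext x
      simp only [Finset.mem_image, Finset.mem_filter, mem_univ, true_and, Finset.mem_Ico]
      constructor
      · rintro ⟨u, ⟨ha, hb⟩, rfl⟩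
        exact ⟨ha, hb⟩
      · rintro ⟨ha, hb⟩
        exact ⟨⟨x, by omega⟩, ⟨ha, hb⟩, rfl⟩
    calc (Finset.univ.filter (fun u : Fin n => 2 * k ≤ (u : ℕ) ∧ (u : ℕ) < n - 1)).card
        = (Finset.image Fin.val
            (Finset.univ.filter (fun u : Fin n => 2 * k ≤ (u : ℕ) ∧ (u : ℕ) < n - 1))).card :=
          (Finset.card_image_of_injective _ Fin.val_injective).symm
      _ = (Finset.Ico (2 * k) (n - 1)).card := by rw [himgv]
      _ = n - 2 * k - 1 := by rw [Nat.card_Ico]; omega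
  · intro u1 h1 u2 h2 heq
    rcases Sym2.eq_iff.1 heq with ⟨ha, -⟩ | ⟨ha, hb⟩
    · exact ha
    · obtain ⟨-, -, hlt⟩ := Finset.mem_filter.1 h1
      have := congrArg Fin.val ha
      rw [hvlval] at this
      omega

end Frac

theorem stmt3 (k n : ℕ) (hk : 1 ≤ k) (hn : 2 * k + 9 ≤ n)
    (G : SimpleGraph (Fin n)) [DecidableRel G.Adj] (hc : G.Connected)
    (he : (jud n (2 * k) (n - 2 * k - 1)).edgeFinset.card ≤ G.edgeFinset.card) :
    FracExt k G ∨ Nonempty (G ≃g jud n (2 * k) (n - 2 * k - 1)) := by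
  classical
  have hsplitG := Frac.card_add_compl G
  have hsplitJ := Frac.card_add_compl (jud n (2 * k) (n - 2 * k - 1))
  have hJcc := Frac.judc_card (n := n) (k := k) hn
  have hGcc : Gᶜ.edgeFinset.card ≤ n - 2 * k - 1 := by omega
  by_cases hbig : ∃ v₀ : Fin n, n - 2 * k - 1 ≤ Gᶜ.degree v₀
  · obtain ⟨v₀, hv₀⟩ := hbig
    exact Or.inr (Frac.caseA hk hn hGcc v₀ hv₀)
  · push_neg at hbig
    left
    have hGc2 : Frac.ncd G Finset.univ ≤ 2 * (n - 2 * k - 1) := by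
      rw [Frac.ncd_univ_eq]
      omega
    have hdeg : ∀ v, Frac.cd G Finset.univ v + 2 * k + 2 ≤ n := by
      intro v
      have h1 := hbig v
      rw [Frac.cd_univ_eq]
      omega
    exact ⟨Frac.matching_exists hn hGc2 k le_rfl,
      fun M hM hMc => Frac.extend hn hGc2 hdeg hM hMc⟩
end

section
/- Let k, δ, s, n be integers with k ≥ 1, δ ≥ 2k+1, s ≥ δ+1, n ≥ 2s-2k+2, and n ≥ 12δ - 2k + 1. Define h(x) = x² + (14k - 5δ + 2n - 5s - 6)x + 2δ² + 2δs + 2s² - (6k+n+2)δ - (6k+n+2)s + 4k² + 2kn + 10k + n - 6. Then h(x) > 0 for all real x ≥ n - δ + 2k + 3. -/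
open Finset

theorem stmt14 (k d s n : ℤ) (hk : 1 ≤ k) (hd : 2 * k + 1 ≤ d) (hs : d + 1 ≤ s)
    (hn1 : 2 * s - 2 * k + 2 ≤ n) (hn2 : 12 * d - 2 * k + 1 ≤ n)
    (x : ℝ) (hx : (n : ℝ) - d + 2 * k + 3 ≤ x) :
    0 < x ^ 2 + (14 * (k : ℝ) - 5 * d + 2 * n - 5 * s - 6) * x +
        2 * (d : ℝ) ^ 2 + 2 * d * s + 2 * (s : ℝ) ^ 2 -
        (6 * (k : ℝ) + n + 2) * d - (6 * (k : ℝ) + n + 2) * s +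
        4 * (k : ℝ) ^ 2 + 2 * k * n + 10 * k + n - 6 := by
  have hk' : (1:ℝ) ≤ k := by exact_mod_cast hk
  have hd' : 2 * (k:ℝ) + 1 ≤ d := by exact_mod_cast hd
  have hs' : (d:ℝ) + 1 ≤ s := by exact_mod_cast hs
  have hn1' : 2 * (s:ℝ) - 2 * k + 2 ≤ n := by exact_mod_cast hn1
  have hn2' : 12 * (d:ℝ) - 2 * k + 1 ≤ n := by exact_mod_cast hn2
  nlinarith [sq_nonneg (x - ((n:ℝ) - d + 2 * k + 3)), sq_nonneg ((s:ℝ)-d-1),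
    sq_nonneg ((d:ℝ)-2*k-1), mul_nonneg (sub_nonneg.2 hx) (sub_nonneg.2 hx),
    mul_nonneg (sub_nonneg.2 hx) (by linarith : (0:ℝ) ≤ n - 12*d + 2*k - 1),
    mul_nonneg (by linarith : (0:ℝ) ≤ n - 12*d + 2*k - 1) (by linarith : (0:ℝ) ≤ s - d - 1),
    sq_nonneg ((n:ℝ) - 2*s + 2*k - 2)]
end

section
/- Let k, δ, s be integers with k ≥ 1, δ ≥ 2k+1, and s ≥ 6δ. Then g(s) = 2s³ + (20k - 15δ + 4)s² + (21δ² + 44k - 34δk - 29δ - 8)s - 8δ³ + 26δ² + 14δ - 20k - 46δk + 14δ²k - 20 satisfies g(s) > 0. -/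
open Finset

theorem stmt15 (k d s : ℤ) (hk : 1 ≤ k) (hd : 2 * k + 1 ≤ d) (hs : 6 * d ≤ s) :
    0 < 2 * s ^ 3 + (20 * k - 15 * d + 4) * s ^ 2 +
        (21 * d ^ 2 + 44 * k - 34 * d * k - 29 * d - 8) * s -
        8 * d ^ 3 + 26 * d ^ 2 + 14 * d - 20 * k - 46 * d * k + 14 * d ^ 2 * k - 20 := by
  have ha : (0:ℤ) ≤ s - 6 * d := by linarith
  have hb : (0:ℤ) ≤ d - 2 * k - 1 := by linarith
  have hc : (0:ℤ) ≤ k - 1 := by linarith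
  nlinarith [ha, hb, hc, mul_nonneg ha ha, mul_nonneg ha hb, mul_nonneg ha hc,
    mul_nonneg hb hb, mul_nonneg hb hc, mul_nonneg hc hc,
    mul_nonneg (mul_nonneg ha ha) ha, mul_nonneg (mul_nonneg ha ha) hb,
    mul_nonneg (mul_nonneg ha ha) hc, mul_nonneg (mul_nonneg ha hb) hb,
    mul_nonneg (mul_nonneg ha hb) hc, mul_nonneg (mul_nonneg ha hc) hc,
    mul_nonneg (mul_nonneg hb hb) hb, mul_nonneg (mul_nonneg hb hb) hc,
    mul_nonneg (mul_nonneg hb hc) hc, mul_nonneg (mul_nonneg hc hc) hc]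
end
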